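/- arXiv:1604.03774 — 5 statements merged into one kernel-verified Lean document; each statement's English description precedes it below -/
import Mathlib

section
/- Let C_i be a linear [n, k_i, d_i] code over the finite field F_q for 1 ≤ i ≤ s, and let A = (a_{ij}) be an s×m matrix over F_q whose rows are linearly independent (full-row-rank). Then the matrix-product code C = [C_1,…,C_s]A is a linear code over F_q of length nm and dimension k_1 + k_2 + ⋯ + k_s, and its minimum distance satisfies d(C) ≥ min{ d_1·d(U_A(1)), d_2·d(U_A(2)), …, d_s·d(U_A(s)) }. -/
open Polynomial Matrix Finset

variable {F : Type*} [Field F]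

/-- The minimum (Hamming) distance of a linear code `C ⊆ F^ι`:
the least Hamming weight of a nonzero codeword. -/
noncomputable def minDist {ι : Type*} [Fintype ι] [DecidableEq F]
    (C : Submodule F (ι → F)) : ℕ :=
  sInf {d | ∃ x ∈ C, x ≠ 0 ∧ hammingNorm x = d}

/-- The Euclidean dual of a linear code. -/
def dualCode {ι : Type*} [Fintype ι] (C : Submodule F (ι → F)) :
    Submodule F (ι → F) where
  carrier := {a | ∀ b ∈ C, ∑ i, a i * b i = 0}
  add_mem' := by
    intro a b ha hb c hc
    simp only [Pi.add_apply, add_mul, Finset.sum_add_distrib,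
      ha c hc, hb c hc, add_zero]
  zero_mem' := by
    intro b hb
    simp
  smul_mem' := by
    intro r a ha b hb
    simp only [Pi.smul_apply, smul_eq_mul, mul_assoc, ← Finset.mul_sum,
      ha b hb, mul_zero]

/-- `C` is a linear complementary dual (LCD) code. -/
def IsLCD {ι : Type*} [Fintype ι] (C : Submodule F (ι → F)) : Prop :=
  C ⊓ dualCode C = ⊥

/-- The Hermitian dual (with respect to `⟨a,b⟩ = ∑ i, a i * (b i)^l`) of a linear code. -/
def hermitianDual (l : ℕ) {ι : Type*} [Fintype ι] (C : Submodule F (ι → F)) :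
    Submodule F (ι → F) where
  carrier := {a | ∀ b ∈ C, ∑ i, a i * (b i) ^ l = 0}
  add_mem' := by
    intro a b ha hb c hc
    simp only [Pi.add_apply, add_mul, Finset.sum_add_distrib,
      ha c hc, hb c hc, add_zero]
  zero_mem' := by
    intro b hb
    simp
  smul_mem' := by
    intro r a ha b hb
    simp only [Pi.smul_apply, smul_eq_mul, mul_assoc, ← Finset.mul_sum,
      ha b hb, mul_zero]

/-- `C` is a Hermitian linear complementary dual code. -/
def IsHermitianLCD (l : ℕ) {ι : Type*} [Fintype ι] (C : Submodule F (ι → F)) : Prop :=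
  C ⊓ hermitianDual l C = ⊥

/-- The matrix-product code `[C_1, …, C_s]·A`: all concatenated vectors
`(∑ i a_{i1} c_i, …, ∑ i a_{im} c_i)` with `c_i ∈ C_i`; coordinates are indexed by
`Fin m × Fin n` (block `j`, position `t` within block). -/
def matrixProductCode {s m n : ℕ} (A : Matrix (Fin s) (Fin m) F)
    (C : Fin s → Submodule F (Fin n → F)) :
    Submodule F (Fin m × Fin n → F) where
  carrier := {x | ∃ c : Fin s → (Fin n → F), (∀ i, c i ∈ C i) ∧
    x = fun p => ∑ i, A i p.1 * c i p.2}
  add_mem' := by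
    rintro x y ⟨c, hc, rfl⟩ ⟨d, hd, rfl⟩
    refine ⟨fun i => c i + d i, fun i => (C i).add_mem (hc i) (hd i), ?_⟩
    funext p
    simp [mul_add, Finset.sum_add_distrib]
  zero_mem' := ⟨0, fun i => (C i).zero_mem, by funext p; simp⟩
  smul_mem' := by
    rintro r x ⟨c, hc, rfl⟩
    refine ⟨fun i => r • c i, fun i => (C i).smul_mem r (hc i), ?_⟩
    funext p
    simp [Finset.mul_sum, mul_left_comm]

/-- A matrix is non-singular by columns (NSC) if, for every `t ≤ s` and every strictly
increasing choice of `t` columns, the `t × t` submatrix formed from the first `t` rows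
and those columns is non-singular. -/
def NSC {s m : ℕ} (A : Matrix (Fin s) (Fin m) F) : Prop :=
  ∀ (t : ℕ) (ht : t ≤ s) (j : Fin t → Fin m), StrictMono j →
    (Matrix.of fun a b : Fin t => A (Fin.castLE ht a) (j b)).det ≠ 0

/-- The cyclic code of length `n` with generator polynomial `g` (a divisor of `Xⁿ - 1`),
viewed in `F^n` via the coefficient identification: a word `c` lies in the code iff the
associated polynomial `∑ cᵢ Xⁱ` (of degree `< n`) is a multiple of `g`. -/
def cyclicCode (n : ℕ) (g : F[X]) : Submodule F (Fin n → F) where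
  carrier := {c | g ∣ ∑ i : Fin n, Polynomial.C (c i) * Polynomial.X ^ (i : ℕ)}
  add_mem' := by
    intro a b ha hb
    have h : (∑ i : Fin n, Polynomial.C ((a + b) i) * Polynomial.X ^ (i : ℕ))
        = (∑ i : Fin n, Polynomial.C (a i) * Polynomial.X ^ (i : ℕ))
          + (∑ i : Fin n, Polynomial.C (b i) * Polynomial.X ^ (i : ℕ)) := by
      simp [add_mul, Finset.sum_add_distrib]
    simp only [Set.mem_setOf_eq] at ha hb ⊢
    rw [h]
    exact dvd_add ha hb
  zero_mem' := by simp
  smul_mem' := by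
    intro r a ha
    have h : (∑ i : Fin n, Polynomial.C ((r • a) i) * Polynomial.X ^ (i : ℕ))
        = Polynomial.C r * ∑ i : Fin n, Polynomial.C (a i) * Polynomial.X ^ (i : ℕ) := by
      simp [Finset.mul_sum, mul_assoc]
    simp only [Set.mem_setOf_eq] at ha ⊢
    rw [h]
    exact ha.mul_left _

/-- The conjugate-reciprocal polynomial
`f^⊥(x) = a₀^{-l} (a_k^l + a_{k-1}^l x + ⋯ + a₀^l x^k)` of `f = a₀ + a₁ x + ⋯ + a_k x^k`. -/
noncomputable def conjReciprocal (l : ℕ) (f : F[X]) : F[X] :=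
  Polynomial.C ((f.coeff 0 ^ l)⁻¹) *
    ∑ i ∈ Finset.range (f.natDegree + 1),
      Polynomial.C (f.coeff (f.natDegree - i) ^ l) * Polynomial.X ^ i

/-!
Write a codeword as `x = (∑ i a_{ij} c_i)_j`. Its `t`-th column `(x_{jt})_j = (c_{it})_i · A` is a
combination of the rows of `A`, so by full row rank `x` determines the `c_i`, which gives the
dimension. For the distance, let `i` be the last index with `c_i ≠ 0`: every column lies in
`U_A(i)`, and the `≥ d_i` columns where `c_{it} ≠ 0` are nonzero, so each carries weight
`≥ d(U_A(i))`.
-/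

theorem hammingNorm_eq_sum_hammingNorm_col {ι κ β : Type*} [Fintype ι] [Fintype κ] [Zero β]
    [DecidableEq β] (x : ι × κ → β) :
    hammingNorm x = ∑ t, hammingNorm fun j => x (j, t) := by
  simp only [hammingNorm, card_filter]
  exact Fintype.sum_prod_type_right _

theorem Fintype.exists_ne_zero_forall_lt_eq_zero {ι M : Type*} [Fintype ι] [LinearOrder ι]
    [Zero M] {c : ι → M} (hc : c ≠ 0) : ∃ i, c i ≠ 0 ∧ ∀ j, i < j → c j = 0 := by
  classical
  obtain ⟨i₀, hi₀⟩ := Function.ne_iff.mp hc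
  have hT : ({i | c i ≠ 0} : Finset ι).Nonempty := ⟨i₀, by simpa using hi₀⟩
  refine ⟨_, (mem_filter.mp (max'_mem _ hT)).2, fun j hj => ?_⟩
  by_contra hcj
  exact (le_max' _ j (by simpa using hcj)).not_gt hj

theorem Matrix.vecMul_mem_span_image_row {ι κ R : Type*} [Fintype ι] [CommSemiring R]
    (A : Matrix ι κ R) {v : ι → R} {S : Set ι} (hv : ∀ i ∉ S, v i = 0) :
    v ᵥ* A ∈ Submodule.span R (A '' S) := by
  classical
  rw [vecMul_eq_sum, ← Finset.sum_filter_of_ne (p := (· ∈ S)) fun i _ h =>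
    by_contra fun hi => h (by rw [hv i hi, zero_smul])]
  exact Submodule.sum_mem _ fun i hi =>
    Submodule.smul_mem _ _ (Submodule.subset_span ⟨i, (mem_filter.mp hi).2, rfl⟩)

section MinDist

variable [DecidableEq F] {ι : Type*} [Fintype ι]

theorem minDist_le_hammingNorm {C : Submodule F (ι → F)} {x : ι → F} (hx : x ∈ C)
    (hx0 : x ≠ 0) : minDist C ≤ hammingNorm x :=
  Nat.sInf_le ⟨x, hx, hx0, rfl⟩

theorem minDist_bot : minDist (⊥ : Submodule F (ι → F)) = 0 := by
  simp [minDist]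

theorem le_minDist {C : Submodule F (ι → F)} (hC : C ≠ ⊥) {b : ℕ}
    (h : ∀ x ∈ C, x ≠ 0 → b ≤ hammingNorm x) : b ≤ minDist C := by
  obtain ⟨x, hx, hx0⟩ := (Submodule.ne_bot_iff C).mp hC
  refine le_csInf ⟨_, x, hx, hx0, rfl⟩ ?_
  rintro _ ⟨y, hy, hy0, rfl⟩
  exact h y hy hy0

end MinDist

section MatrixProduct

variable {s m n : ℕ} (A : Matrix (Fin s) (Fin m) F) (C : Fin s → Submodule F (Fin n → F))

def matrixProductMap : (∀ i, C i) →ₗ[F] (Fin m × Fin n → F) where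
  toFun c p := ∑ i, A i p.1 * (c i : Fin n → F) p.2
  map_add' a b := by
    funext p
    simp [mul_add, Finset.sum_add_distrib]
  map_smul' r a := by
    funext p
    simp [Finset.mul_sum, mul_left_comm]

theorem range_matrixProductMap :
    LinearMap.range (matrixProductMap A C) = matrixProductCode A C := by
  ext x
  constructor
  · rintro ⟨c, rfl⟩
    exact ⟨fun i => c i, fun i => (c i).2, rfl⟩
  · rintro ⟨c, hc, rfl⟩
    exact ⟨fun i => ⟨c i, hc i⟩, rfl⟩

theorem matrixProduct_col_eq_vecMul (c : Fin s → Fin n → F) (t : Fin n) :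
    (fun j => ∑ i, A i j * c i t) = (fun i => c i t) ᵥ* A := by
  ext j
  simp [vecMul, dotProduct, mul_comm]

variable {A}

theorem matrixProductMap_injective (hA : LinearIndependent F A) :
    Function.Injective (matrixProductMap A C) := by
  rw [← LinearMap.ker_eq_bot, LinearMap.ker_eq_bot']
  intro c hc
  have hcol (t : Fin n) : (fun i => (c i : Fin n → F) t) = 0 :=
    Matrix.vecMul_injective_iff.mpr hA <| by
      dsimp only
      rw [← matrixProduct_col_eq_vecMul A (fun i => (c i : Fin n → F)) t, zero_vecMul]
      funext j
      exact congrFun hc (j, t)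
  funext i
  ext t
  exact congrFun (hcol t) i

theorem finrank_matrixProductCode (hA : LinearIndependent F A) :
    Module.finrank F (matrixProductCode A C) = ∑ i, Module.finrank F (C i) := by
  rw [← range_matrixProductMap, LinearMap.finrank_range_of_inj (matrixProductMap_injective C hA),
    Module.finrank_pi_fintype]

theorem eq_bot_of_matrixProductCode_eq_bot (hA : LinearIndependent F A)
    (h : matrixProductCode A C = ⊥) (i : Fin s) : C i = ⊥ := by
  have hdim := finrank_matrixProductCode C hA
  rw [h, finrank_bot, eq_comm, Finset.sum_eq_zero_iff] at hdim
  exact Submodule.finrank_eq_zero.mp (hdim i (mem_univ i))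

theorem exists_mul_minDist_le_hammingNorm [DecidableEq F] (hA : LinearIndependent F A)
    {x : Fin m × Fin n → F} (hx : x ∈ matrixProductCode A C) (hx0 : x ≠ 0) :
    ∃ i, minDist (C i) * minDist (Submodule.span F (A '' {j | j ≤ i})) ≤ hammingNorm x := by
  obtain ⟨c, hc, rfl⟩ := hx
  obtain ⟨i, hci, hgt⟩ := Fintype.exists_ne_zero_forall_lt_eq_zero (c := c) <| by
    rintro rfl
    exact hx0 (funext fun p => by simp)
  set U := Submodule.span F (A '' {j | j ≤ i})
  have hcol (t : Fin n) (ht : c i t ≠ 0) :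
      minDist U ≤ hammingNorm ((fun i => c i t) ᵥ* A) := by
    refine minDist_le_hammingNorm (A.vecMul_mem_span_image_row fun j hj => ?_) fun h0 => ht ?_
    · rw [hgt j (not_le.mp hj), Pi.zero_apply]
    · exact congrFun (Matrix.vecMul_injective_iff.mpr hA (h0.trans (zero_vecMul A).symm)) i
  refine ⟨i, ?_⟩
  calc minDist (C i) * minDist U
      ≤ hammingNorm (c i) * minDist U := by gcongr; exact minDist_le_hammingNorm (hc i) hci
    _ = ∑ t ∈ {t | c i t ≠ 0}, minDist U := by rw [sum_const, smul_eq_mul]; rfl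
    _ ≤ ∑ t ∈ {t | c i t ≠ 0}, hammingNorm ((fun i => c i t) ᵥ* A) :=
        sum_le_sum fun t ht => hcol t (mem_filter.mp ht).2
    _ ≤ ∑ t, hammingNorm ((fun i => c i t) ᵥ* A) := sum_le_sum_of_subset (subset_univ _)
    _ = hammingNorm fun p : Fin m × Fin n => ∑ i, A i p.1 * c i p.2 := by
        simp only [hammingNorm_eq_sum_hammingNorm_col, matrixProduct_col_eq_vecMul]

end MatrixProduct

theorem stmt0_general {F : Type*} [Field F] [Fintype F] [DecidableEq F]
    {s m n : ℕ} (A : Matrix (Fin s) (Fin m) F)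
    (hFRR : LinearIndependent F A)
    (C : Fin s → Submodule F (Fin n → F)) (k d : Fin s → ℕ)
    (hk : ∀ i, Module.finrank F (C i) = k i)
    (hd : ∀ i, minDist (C i) = d i) :
    Module.finrank F (matrixProductCode A C) = ∑ i, k i ∧
    sInf {v | ∃ i : Fin s,
        v = d i * minDist (Submodule.span F (A '' {j : Fin s | j ≤ i}))}
      ≤ minDist (matrixProductCode A C) := by
  refine ⟨(finrank_matrixProductCode C hFRR).trans (sum_congr rfl fun i _ => hk i), ?_⟩
  by_cases hbot : matrixProductCode A C = ⊥
  · -- `minDist ⊥ = sInf ∅ = 0`, so here the bound has to collapse to `0`.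
    refine (Nat.sInf_eq_zero.mpr ?_).trans_le (Nat.zero_le _)
    rcases isEmpty_or_nonempty (Fin s) with hs | ⟨⟨i⟩⟩
    · exact Or.inr (Set.eq_empty_of_forall_notMem fun v ⟨i, _⟩ => hs.elim i)
    · have hdi : d i = 0 := by
        rw [← hd i, eq_bot_of_matrixProductCode_eq_bot C hFRR hbot i, minDist_bot]
      exact Or.inl ⟨i, by rw [hdi, zero_mul]⟩
  · refine le_minDist hbot fun x hx hx0 => ?_
    obtain ⟨i, hi⟩ := exists_mul_minDist_le_hammingNorm C hFRR hx hx0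
    exact le_trans (Nat.sInf_le ⟨i, by rw [hd]⟩) hi

theorem stmt0 {F : Type*} [Field F] [Fintype F] [DecidableEq F]
    {s m n : ℕ} (A : Matrix (Fin s) (Fin m) F)
    (hFRR : LinearIndependent F A)
    (C : Fin s → Submodule F (Fin n → F)) (k d : Fin s → ℕ)
    (hk : ∀ i, Module.finrank F (C i) = k i)
    (hC : ∀ i, C i ≠ ⊥)
    (hd : ∀ i, minDist (C i) = d i) :
    Module.finrank F (matrixProductCode A C) = ∑ i, k i ∧
    sInf {v | ∃ i : Fin s,
        v = d i * minDist (Submodule.span F (A '' {j : Fin s | j ≤ i}))}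
      ≤ minDist (matrixProductCode A C) :=
  stmt0_general A hFRR C k d hk hd
end

section
/- Let A be a non-singular s×s matrix over the finite field F_q and let C_1,…,C_s be linear codes of length n over F_q. Then the Euclidean dual of the matrix-product code satisfies ([C_1,…,C_s]A)^⊥ = [C_1^⊥,…,C_s^⊥](A^{−1})^T, where (A^{−1})^T is the transpose of the inverse of A. -/
open Polynomial Matrix Finset

variable {F : Type*} [Field F]

/-! Write `[c]A` for the word `p ↦ ∑ i, A i p.1 * c i p.2`. Position by position in the
inner block, the pairing of `[d]B` with `[c]A` is `∑ t, d_t ⬝ᵥ (B Aᵀ) c_t`, so `B Aᵀ = 1`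
gives `[C^⊥]B ⊆ ([C]A)^⊥`. Conversely, a word `a ⊥ [C]A` yields `d i := ∑ j, A i j • a_j`,
which lies in `C_i^⊥` because `[C]A` contains every `A i ⊗ b` with `b ∈ C_i`, and
`[d]B = a` as soon as `Bᵀ A = 1`. For `B = (A⁻¹)ᵀ` both conditions hold. -/

section MatrixProductDual

variable {s m n : ℕ}

theorem row_tensor_mem_matrixProductCode (A : Matrix (Fin s) (Fin m) F)
    (C : Fin s → Submodule F (Fin n → F)) {i : Fin s} {b : Fin n → F} (hb : b ∈ C i) :
    (fun p : Fin m × Fin n => A i p.1 * b p.2) ∈ matrixProductCode A C := by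
  refine ⟨Pi.single i b, fun k => ?_, ?_⟩
  · rcases eq_or_ne k i with rfl | hk
    · simpa using hb
    · simp [hk]
  · funext p
    rw [Finset.sum_eq_single i (fun k _ hk => by simp [hk]) (by simp)]
    simp

theorem sum_mul_sum_eq_sum_dotProduct_mulVec (A B : Matrix (Fin s) (Fin m) F)
    (c d : Fin s → Fin n → F) :
    ∑ p : Fin m × Fin n, (∑ i, B i p.1 * d i p.2) * (∑ k, A k p.1 * c k p.2)
      = ∑ t, (fun i => d i t) ⬝ᵥ ((B * Aᵀ) *ᵥ fun k => c k t) := by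
  rw [Fintype.sum_prod_type_right]
  refine Finset.sum_congr rfl fun t _ => ?_
  rw [← mulVec_mulVec, dotProduct_mulVec]
  simp only [dotProduct, vecMul, mulVec, transpose_apply]
  refine Finset.sum_congr rfl fun j _ => ?_
  simp only [mul_comm]

theorem matrixProductCode_dualCode_le {A B : Matrix (Fin s) (Fin m) F} (hBA : B * Aᵀ = 1)
    (C : Fin s → Submodule F (Fin n → F)) :
    matrixProductCode B (fun i => dualCode (C i)) ≤ dualCode (matrixProductCode A C) := by
  rintro _ ⟨d, hd, rfl⟩ _ ⟨c, hc, rfl⟩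
  rw [sum_mul_sum_eq_sum_dotProduct_mulVec, hBA]
  simp only [one_mulVec, dotProduct]
  rw [Finset.sum_comm]
  exact Finset.sum_eq_zero fun i _ => hd i _ (hc i)

theorem dualCode_matrixProductCode_le {A B : Matrix (Fin s) (Fin m) F} (hBA : Bᵀ * A = 1)
    (C : Fin s → Submodule F (Fin n → F)) :
    dualCode (matrixProductCode A C) ≤ matrixProductCode B (fun i => dualCode (C i)) := by
  intro a ha
  refine ⟨fun i t => ∑ j, A i j * a (j, t), fun i b hb => ?_, ?_⟩
  · have h := ha _ (row_tensor_mem_matrixProductCode A C hb)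
    rw [Fintype.sum_prod_type] at h
    simp only [Finset.sum_mul] at h ⊢
    rw [← h, Finset.sum_comm]
    exact Finset.sum_congr rfl fun j _ => Finset.sum_congr rfl fun t _ => by ring
  · funext p
    have h := congrFun (congrArg (· *ᵥ fun j => a (j, p.2)) hBA) p.1
    simp only [← mulVec_mulVec, one_mulVec] at h
    rw [← h]
    simp only [mulVec, dotProduct, transpose_apply, Finset.mul_sum]

end MatrixProductDual

theorem stmt3_general {F : Type*} [Field F]
    {s n : ℕ} (A : Matrix (Fin s) (Fin s) F) (hA : IsUnit A.det)
    (C : Fin s → Submodule F (Fin n → F)) :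
    dualCode (matrixProductCode A C)
      = matrixProductCode (A⁻¹)ᵀ (fun i => dualCode (C i)) := by
  refine le_antisymm (dualCode_matrixProductCode_le ?_ C) (matrixProductCode_dualCode_le ?_ C)
  · rw [transpose_transpose, nonsing_inv_mul A hA]
  · rw [← transpose_mul, mul_nonsing_inv A hA, transpose_one]

theorem stmt3 {F : Type*} [Field F] [Fintype F]
    {s n : ℕ} (A : Matrix (Fin s) (Fin s) F) (hA : IsUnit A.det)
    (C : Fin s → Submodule F (Fin n → F)) :
    dualCode (matrixProductCode A C)
      = matrixProductCode (A⁻¹)ᵀ (fun i => dualCode (C i)) :=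
  stmt3_general A hA C
end

section
/- Let C be a cyclic code of length n over the finite field F_q with generator polynomial g_1(x) (the monic divisor of x^n − 1 generating C). Then C is an LCD code if and only if g_1(x) is self-reciprocal (i.e., its monic reciprocal polynomial equals g_1(x)) and every monic irreducible factor of g_1(x) has the same multiplicity in g_1(x) as in x^n − 1. -/
open Polynomial Matrix Finset

variable {F : Type*} [Field F]

/-!
For a word `b` with polynomial `B`, put `B* = X^(n-1) B(1/X)`. The inner product of words `a`
and `b` is the coefficient of `X^(n-1)` in `A B*`, so `b ⊥ C` says that `g B*` has no terms of
degree in `[deg g, n)`; with `g h = Xⁿ - 1` this happens exactly when `h ∣ B*`, i.e. `h̃ ∣ B`.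
Hence `C^⊥` is the cyclic code generated by `h̃`, and since `deg g + deg h̃ = n`, `C ∩ C^⊥ = 0`
iff `g` and `h̃` are coprime. As `g̃ h̃ = Xⁿ - 1`, coprimality gives `g ∣ g̃`, so `g = g̃` and then
`h̃ = h`. Finally `g` is coprime to `h` iff each irreducible factor of `g` has the same
multiplicity in `g` as in `g h = Xⁿ - 1`.
-/

noncomputable def wordPoly (n : ℕ) (b : Fin n → F) : F[X] :=
  ∑ i : Fin n, C (b i) * X ^ (i : ℕ)

theorem coeff_wordPoly (n : ℕ) (b : Fin n → F) (j : ℕ) :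
    (wordPoly n b).coeff j = if h : j < n then b ⟨j, h⟩ else 0 := by
  simp only [wordPoly, finsetSum_coeff, coeff_C_mul_X_pow]
  split_ifs with h
  · rw [Finset.sum_eq_single ⟨j, h⟩ (fun i _ hi => if_neg fun hj => hi (Fin.ext hj.symm))
      (by simp)]
    simp
  · exact Finset.sum_eq_zero fun i _ => if_neg (by omega)

theorem degree_wordPoly_lt (n : ℕ) (b : Fin n → F) : (wordPoly n b).degree < n :=
  (degree_lt_iff_coeff_zero _ _).mpr fun j hj => by simp [coeff_wordPoly, not_lt.mpr hj]

theorem natDegree_wordPoly_le (n : ℕ) (b : Fin n → F) : (wordPoly n b).natDegree ≤ n - 1 :=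
  natDegree_le_iff_coeff_eq_zero.mpr fun j hj => by
    simp [coeff_wordPoly, show ¬ j < n by omega]

theorem wordPoly_coeff {n : ℕ} {p : F[X]} (hp : p.degree < n) :
    wordPoly n (fun i => p.coeff i) = p := by
  ext j
  rw [coeff_wordPoly]
  split_ifs with h
  · rfl
  · exact ((degree_lt_iff_coeff_zero _ _).mp hp j (not_lt.mp h)).symm

theorem wordPoly_injective (n : ℕ) : Function.Injective (wordPoly (F := F) n) := by
  intro a b hab
  funext i
  simpa [coeff_wordPoly] using congrArg (coeff · i) hab

theorem mem_cyclicCode_iff {n : ℕ} {g : F[X]} {b : Fin n → F} :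
    b ∈ cyclicCode n g ↔ g ∣ wordPoly n b :=
  Iff.rfl

theorem sum_mul_eq_coeff_wordPoly_mul_reflect {n : ℕ} (hn : 0 < n) (a b : Fin n → F) :
    ∑ i, a i * b i = (wordPoly n a * reflect (n - 1) (wordPoly n b)).coeff (n - 1) := by
  rw [coeff_mul, Finset.Nat.sum_antidiagonal_eq_sum_range_succ_mk, Nat.succ_eq_add_one,
    Nat.sub_add_cancel hn, ← Fin.sum_univ_eq_sum_range]
  refine Finset.sum_congr rfl fun i _ => ?_
  rw [coeff_wordPoly, coeff_reflect, revAt_le (by omega), coeff_wordPoly,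
    dif_pos i.isLt, dif_pos (by omega)]
  simp only [show n - 1 - (n - 1 - (i : ℕ)) = i by omega, Fin.eta]

section

variable {R : Type*} [Semiring R]

theorem natDegree_reverse_of_coeff_zero_ne_zero {f : R[X]} (hf : f.coeff 0 ≠ 0) :
    f.reverse.natDegree = f.natDegree := by
  rw [reverse_natDegree, natTrailingDegree_eq_zero.mpr (Or.inr hf), Nat.sub_zero]

theorem reverse_reverse_of_coeff_zero_ne_zero {f : R[X]} (hf : f.coeff 0 ≠ 0) :
    f.reverse.reverse = f := by
  rw [reverse, natDegree_reverse_of_coeff_zero_ne_zero hf, reverse, reflect_reflect]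

theorem reverse_dvd_reflect [NoZeroDivisors R] {h B : R[X]} {N : ℕ} (hB : B.natDegree ≤ N)
    (hdvd : h ∣ B) :
    h.reverse ∣ reflect N B := by
  obtain ⟨Q, rfl⟩ := hdvd
  rcases eq_or_ne Q 0 with rfl | hQ
  · simp
  by_cases hh : h = 0
  · simp [hh]
  rw [natDegree_mul hh hQ] at hB
  rw [show N = h.natDegree + (N - h.natDegree) by omega, reflect_mul h Q le_rfl (by omega)]
  exact dvd_mul_right _ _

theorem degree_lt_of_degree_mul_lt [NoZeroDivisors R] {p q : R[X]} {b : ℕ} (hp : p ≠ 0)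
    (h : (p * q).degree < ↑(p.natDegree + b)) : q.degree < b := by
  rw [degree_mul, degree_eq_natDegree hp, Nat.cast_add] at h
  exact (WithBot.add_lt_add_iff_left WithBot.coe_ne_bot).mp h

theorem degree_mul_lt_of_degree_lt [NoZeroDivisors R] {p q : R[X]} {b : ℕ} (hp : p ≠ 0)
    (h : q.degree < b) :
    (p * q).degree < ↑(p.natDegree + b) := by
  rw [degree_mul, degree_eq_natDegree hp, Nat.cast_add]
  exact WithBot.add_lt_add_left WithBot.coe_ne_bot h

end

section

variable {R : Type*} [Ring R]

theorem natDegree_X_pow_sub_one [Nontrivial R] (n : ℕ) : (X ^ n - 1 : R[X]).natDegree = n := by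
  simpa using natDegree_X_pow_sub_C (R := R) (n := n) (r := 1)

theorem coeff_X_pow_sub_one_mul_eq_zero {n d i : ℕ} {Q : R[X]}
    (hQ : Q.degree < d) (hdi : d ≤ i) (hin : i < n) : ((X ^ n - 1) * Q).coeff i = 0 := by
  rw [sub_mul, one_mul, coeff_sub, coeff_X_pow_mul', if_neg (by omega),
    (degree_lt_iff_coeff_zero _ _).mp hQ i hdi, sub_zero]

end

theorem coeff_zero_ne_zero_of_dvd_X_pow_sub_one {n : ℕ} (hn : 0 < n) {g : F[X]}
    (hg : g ∣ X ^ n - 1) : g.coeff 0 ≠ 0 := by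
  obtain ⟨h, hgh⟩ := hg
  intro hg0
  simpa [mul_coeff_zero, hg0, coeff_X_pow, hn.ne] using congrArg (coeff · 0) hgh

theorem dvd_iff_coeff_mul_eq_zero {n : ℕ} {g h P : F[X]} (hg : g.Monic) (hh : h.Monic)
    (hgh : g * h = X ^ n - 1) (hP : P.degree < n) :
    h ∣ P ↔ ∀ i, g.natDegree ≤ i → i < n → (g * P).coeff i = 0 := by
  have hdeg : h.natDegree + g.natDegree = n := by
    rw [add_comm, ← natDegree_mul hg.ne_zero hh.ne_zero, hgh, natDegree_X_pow_sub_one]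
  constructor
  · rintro ⟨q, rfl⟩ i hi hin
    have hq : q.degree < g.natDegree := degree_lt_of_degree_mul_lt hh.ne_zero (by rwa [hdeg])
    rw [← mul_assoc, hgh]
    exact coeff_X_pow_sub_one_mul_eq_zero hq hi hin
  · intro hcoeff
    set q := P /ₘ h
    set r := P %ₘ h
    have hPqr : r + h * q = P := modByMonic_add_div P h
    have hr : r.degree < h.natDegree := by
      simpa [degree_eq_natDegree hh.ne_zero] using degree_modByMonic_lt P hh
    have hq : q.degree < g.natDegree := by
      refine degree_lt_of_degree_mul_lt hh.ne_zero ?_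
      rw [hdeg, eq_sub_of_add_eq' hPqr]
      exact (degree_sub_le _ _).trans_lt (max_lt hP (hr.trans_le (by exact_mod_cast (by omega))))
    -- `g * r` has no terms of degree `≥ deg g`, yet is divisible by `g`.
    have hgr : g * r = g * P - (X ^ n - 1) * q := by rw [← hgh, ← hPqr]; ring
    have hgr_lt : (g * r).degree < g.degree := by
      rw [degree_eq_natDegree hg.ne_zero, degree_lt_iff_coeff_zero]
      intro m hm
      by_cases hmn : m < n
      · rw [hgr, coeff_sub, hcoeff m hm hmn, coeff_X_pow_sub_one_mul_eq_zero hq hm hmn, sub_zero]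
      · refine coeff_eq_zero_of_degree_lt ((degree_mul_lt_of_degree_lt hg.ne_zero hr).trans_le ?_)
        exact_mod_cast (by omega)
    have hgr0 : g * r = 0 := eq_zero_of_dvd_of_degree_lt (dvd_mul_right g r) hgr_lt
    exact (modByMonic_eq_zero_iff_dvd hh).mp ((mul_eq_zero.mp hgr0).resolve_left hg.ne_zero)

noncomputable def monicReciprocal (f : F[X]) : F[X] := C (f.coeff 0)⁻¹ * f.reverse

theorem monicReciprocal_mul (f g : F[X]) :
    monicReciprocal (f * g) = monicReciprocal f * monicReciprocal g := by
  simp only [monicReciprocal, mul_coeff_zero, reverse_mul_of_domain, mul_inv, map_mul]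
  ring

theorem natDegree_monicReciprocal {f : F[X]} (hf : f.coeff 0 ≠ 0) :
    (monicReciprocal f).natDegree = f.natDegree := by
  rw [monicReciprocal, natDegree_C_mul (inv_ne_zero hf),
    natDegree_reverse_of_coeff_zero_ne_zero hf]

theorem monic_monicReciprocal {f : F[X]} (hf : f.coeff 0 ≠ 0) : (monicReciprocal f).Monic := by
  rw [Monic, monicReciprocal,
    leadingCoeff_C_mul_of_isUnit (isUnit_iff_ne_zero.mpr (inv_ne_zero hf)), reverse_leadingCoeff,
    trailingCoeff, natTrailingDegree_eq_zero.mpr (Or.inr hf), inv_mul_cancel₀ hf]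

theorem monicReciprocal_X_pow_sub_one {n : ℕ} (hn : 0 < n) :
    monicReciprocal (X ^ n - 1 : F[X]) = X ^ n - 1 := by
  have hcoeff : (X ^ n - 1 : F[X]).coeff 0 = -1 := by simp [coeff_X_pow, hn.ne]
  rw [monicReciprocal, reverse, natDegree_X_pow_sub_one, hcoeff, reflect_sub, reflect_monomial,
    reflect_one, revAt_le le_rfl, Nat.sub_self, pow_zero]
  simp only [inv_neg, inv_one, map_neg, map_one]
  ring

theorem dvd_reflect_iff {h B : F[X]} {N : ℕ} (hh : h.coeff 0 ≠ 0) (hB : B.natDegree ≤ N) :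
    h ∣ reflect N B ↔ monicReciprocal h ∣ B := by
  rw [monicReciprocal, C_mul_dvd (inv_ne_zero hh)]
  constructor
  · intro hdvd
    simpa using reverse_dvd_reflect (natDegree_reflect_le.trans (max_le le_rfl hB)) hdvd
  · intro hdvd
    simpa [reverse_reverse_of_coeff_zero_ne_zero hh] using reverse_dvd_reflect hB hdvd

theorem mem_dualCode_cyclicCode_iff {n : ℕ} (hn : 0 < n) {g : F[X]} (hg : g ≠ 0)
    (b : Fin n → F) :
    b ∈ dualCode (cyclicCode n g) ↔
      ∀ i, g.natDegree ≤ i → i < n → (g * reflect (n - 1) (wordPoly n b)).coeff i = 0 := by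
  set B' := reflect (n - 1) (wordPoly n b)
  have pairing : ∀ c, ∑ j, b j * c j = (wordPoly n c * B').coeff (n - 1) := fun c => by
    simp_rw [mul_comm (b _)]
    exact sum_mul_eq_coeff_wordPoly_mul_reflect hn c b
  constructor
  · intro hb i hi hin
    -- pairing `b` with the codeword `g * X ^ (n - 1 - i)` reads off the `i`-th coefficient
    have hdeg : (g * X ^ (n - 1 - i)).degree < (n : WithBot ℕ) := by
      refine (degree_mul_lt_of_degree_lt hg (b := n - i) ?_).trans_le ?_
      · rw [degree_X_pow]
        exact_mod_cast (by omega)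
      · exact_mod_cast (by omega)
    have hc : (fun j : Fin n => (g * X ^ (n - 1 - i)).coeff j) ∈ cyclicCode n g := by
      rw [mem_cyclicCode_iff, wordPoly_coeff hdeg]
      exact dvd_mul_right _ _
    have := hb _ hc
    rwa [pairing, wordPoly_coeff hdeg, mul_right_comm, coeff_mul_X_pow', if_pos (by omega),
      show n - 1 - (n - 1 - i) = i by omega] at this
  · intro hcoeff c hc
    obtain ⟨m, hm⟩ := mem_cyclicCode_iff.mp hc
    have hm_deg : m.degree < ↑(n - g.natDegree) := by
      refine degree_lt_of_degree_mul_lt hg ((hm ▸ degree_wordPoly_lt n c).trans_le ?_)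
      exact_mod_cast (by omega)
    rw [pairing, hm, mul_comm g m, mul_assoc, coeff_mul]
    refine Finset.sum_eq_zero fun p hp => ?_
    rw [HasAntidiagonal.mem_antidiagonal] at hp
    by_cases hp1 : p.1 < n - g.natDegree
    · rw [hcoeff p.2 (by omega) (by omega), mul_zero]
    · rw [(degree_lt_iff_coeff_zero _ _).mp hm_deg p.1 (by omega), zero_mul]

theorem dualCode_cyclicCode {n : ℕ} (hn : 0 < n) {g h : F[X]} (hg : g.Monic)
    (hgh : g * h = X ^ n - 1) :
    dualCode (cyclicCode n g) = cyclicCode n (monicReciprocal h) := by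
  have hh : h.Monic := hg.of_mul_monic_left (hgh ▸ leadingCoeff_X_pow_sub_one hn)
  have hh0 : h.coeff 0 ≠ 0 := coeff_zero_ne_zero_of_dvd_X_pow_sub_one hn (Dvd.intro_left g hgh)
  ext b
  have hB' : (reflect (n - 1) (wordPoly n b)).degree < n :=
    (degree_le_of_natDegree_le (natDegree_reflect_le.trans (max_le le_rfl
      (natDegree_wordPoly_le n b)))).trans_lt (by exact_mod_cast Nat.sub_one_lt hn.ne')
  rw [mem_dualCode_cyclicCode_iff hn hg.ne_zero, mem_cyclicCode_iff,
    ← dvd_reflect_iff hh0 (natDegree_wordPoly_le n b), dvd_iff_coeff_mul_eq_zero hg hh hgh hB']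

theorem cyclicCode_inf_eq_bot_iff {n : ℕ} {a b : F[X]} (ha : a ≠ 0) (hb : b ≠ 0)
    (hab : a.natDegree + b.natDegree = n) :
    cyclicCode n a ⊓ cyclicCode n b = ⊥ ↔ IsCoprime a b := by
  rw [Submodule.eq_bot_iff]
  constructor
  · intro hbot
    refine isCoprime_of_irreducible_dvd (fun h => ha h.1) fun z hz hza hzb => ?_
    obtain ⟨a', rfl⟩ := hza
    have ha' : a' ≠ 0 := right_ne_zero_of_mul ha
    have hdeg : (a' * b).degree < n := by
      rw [degree_eq_natDegree (mul_ne_zero ha' hb), natDegree_mul ha' hb]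
      rw [natDegree_mul hz.ne_zero ha'] at hab
      exact_mod_cast (by have := hz.natDegree_pos; omega)
    have hmem :
        (fun i : Fin n => (a' * b).coeff i) ∈ cyclicCode n (z * a') ⊓ cyclicCode n b := by
      rw [Submodule.mem_inf, mem_cyclicCode_iff, mem_cyclicCode_iff, wordPoly_coeff hdeg,
        mul_comm z]
      exact ⟨mul_dvd_mul_left a' hzb, dvd_mul_left b a'⟩
    have h0 := congrArg (wordPoly n) (hbot _ hmem)
    rw [wordPoly_coeff hdeg] at h0
    exact mul_ne_zero ha' hb (h0.trans (by simp [wordPoly]))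
  · intro hcop x hx
    rw [Submodule.mem_inf, mem_cyclicCode_iff, mem_cyclicCode_iff] at hx
    apply wordPoly_injective n
    rw [eq_zero_of_dvd_of_degree_lt (hcop.mul_dvd hx.1 hx.2) ?_]
    · simp [wordPoly]
    · rw [degree_eq_natDegree (mul_ne_zero ha hb), natDegree_mul ha hb, hab]
      exact degree_wordPoly_lt n x

theorem isLCD_cyclicCode_iff {n : ℕ} (hn : 0 < n) {g h : F[X]} (hg : g.Monic)
    (hgh : g * h = X ^ n - 1) :
    IsLCD (cyclicCode n g) ↔ IsCoprime g (monicReciprocal h) := by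
  have hh0 : h.coeff 0 ≠ 0 := coeff_zero_ne_zero_of_dvd_X_pow_sub_one hn (Dvd.intro_left g hgh)
  have hh : h ≠ 0 := fun h0 => hh0 (by simp [h0])
  rw [IsLCD, dualCode_cyclicCode hn hg hgh]
  refine cyclicCode_inf_eq_bot_iff hg.ne_zero (monic_monicReciprocal hh0).ne_zero ?_
  rw [natDegree_monicReciprocal hh0, ← natDegree_mul hg.ne_zero hh, hgh, natDegree_X_pow_sub_one]

theorem isCoprime_monicReciprocal_iff {n : ℕ} (hn : 0 < n) {g h : F[X]} (hg : g.Monic)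
    (hgh : g * h = X ^ n - 1) :
    IsCoprime g (monicReciprocal h) ↔ g = monicReciprocal g ∧ IsCoprime g h := by
  have hg0 : g.coeff 0 ≠ 0 := coeff_zero_ne_zero_of_dvd_X_pow_sub_one hn (Dvd.intro h hgh)
  have hrec : monicReciprocal g * monicReciprocal h = g * h := by
    rw [← monicReciprocal_mul, hgh, monicReciprocal_X_pow_sub_one hn]
  have hh_self (hself : g = monicReciprocal g) : monicReciprocal h = h :=
    mul_left_cancel₀ hg.ne_zero (by rw [← hrec, ← hself])
  constructor
  · intro hcop
    have hself : g = monicReciprocal g :=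
      (eq_of_monic_of_dvd_of_natDegree_le hg (monic_monicReciprocal hg0)
        (hcop.dvd_of_dvd_mul_right (hrec ▸ dvd_mul_right g h))
        (natDegree_monicReciprocal hg0).le).symm
    exact ⟨hself, hh_self hself ▸ hcop⟩
  · rintro ⟨hself, hcop⟩
    rwa [hh_self hself]

theorem isCoprime_iff_forall_pow_dvd_mul {g h : F[X]} (hg : g ≠ 0) :
    IsCoprime g h ↔ ∀ p : F[X], p.Monic → Irreducible p → p ∣ g →
      ∀ e : ℕ, p ^ e ∣ g ↔ p ^ e ∣ g * h := by
  constructor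
  · intro hcop p _ hp hpg e
    have hph : ¬ p ∣ h := fun hph => hp.not_isUnit (hcop.isUnit_of_dvd' hpg hph)
    exact ⟨fun hpe => hpe.mul_right h, hp.prime.pow_dvd_of_dvd_mul_right e hph⟩
  · intro hmult
    refine isCoprime_of_irreducible_dvd (fun h => hg h.1) fun z hz hzg hzh => ?_
    classical
    have hpz : Associated (normalize z) z := normalize_associated z
    have hp : Irreducible (normalize z) := hpz.symm.irreducible hz
    have hfin : FiniteMultiplicity (normalize z) g :=
      FiniteMultiplicity.of_not_isUnit hp.not_isUnit hg
    apply hfin.not_pow_dvd_of_multiplicity_lt (Nat.lt_succ_self _)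
    rw [hmult _ (monic_normalize hz.ne_zero) hp (hpz.dvd.trans hzg), pow_succ]
    exact mul_dvd_mul (pow_multiplicity_dvd _ g) (hpz.dvd.trans hzh)

theorem stmt5_general {F : Type*} [Field F] {n : ℕ} (hn : 0 < n)
    (g : F[X]) (hg : g.Monic) (hgdvd : g ∣ (Polynomial.X ^ n - 1 : F[X])) :
    IsLCD (cyclicCode n g) ↔
      (g = Polynomial.C (g.coeff 0)⁻¹ * g.reverse ∧
        ∀ p : F[X], p.Monic → Irreducible p → p ∣ g →
          ∀ e : ℕ, p ^ e ∣ g ↔ p ^ e ∣ (Polynomial.X ^ n - 1 : F[X])) := by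
  obtain ⟨h, hgh⟩ := hgdvd
  rw [isLCD_cyclicCode_iff hn hg hgh.symm, isCoprime_monicReciprocal_iff hn hg hgh.symm,
    isCoprime_iff_forall_pow_dvd_mul hg.ne_zero, hgh]
  rfl

theorem stmt5 {F : Type*} [Field F] [Fintype F] {n : ℕ} (hn : 0 < n)
    (g : F[X]) (hg : g.Monic) (hgdvd : g ∣ (Polynomial.X ^ n - 1 : F[X])) :
    IsLCD (cyclicCode n g) ↔
      (g = Polynomial.C (g.coeff 0)⁻¹ * g.reverse ∧
        ∀ p : F[X], p.Monic → Irreducible p → p ∣ g →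
          ∀ e : ℕ, p ^ e ∣ g ↔ p ^ e ∣ (Polynomial.X ^ n - 1 : F[X])) :=
  stmt5_general hn g hg hgdvd
end

section
/- Let A be a non-singular lower-triangular s×s matrix over the finite field F_q, and let C_1 ⊇ C_2 ⊇ ⋯ ⊇ C_s be a decreasing chain of linear codes of length n over F_q. Then the matrix-product code C = [C_1,…,C_s]A is an LCD code if and only if C_1,…,C_s are all LCD codes. -/
open Polynomial Matrix Finset

variable {F : Type*} [Field F]

/-!
Block `j` of a word of `[C_1, …, C_s] A` is `∑_{i ≥ j} a_{ij} c_i`, which lies in `C_j` because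
the chain is decreasing. As `A⁻¹` is lower-triangular too, the same argument run backwards shows
that `[C_1, …, C_s] A = C_1 × ⋯ × C_s`, the codes sitting on disjoint blocks of coordinates. The
dual of this product is `C_1^⊥ × ⋯ × C_s^⊥`, so it meets its dual trivially iff every `C_j` does.
-/

/-- The matrix-product code `[C_1, …, C_s] I`. -/
def blockCode {σ ι : Type*} (C : σ → Submodule F (ι → F)) : Submodule F (σ × ι → F) where
  carrier := {x | ∀ j, (fun t => x (j, t)) ∈ C j}
  add_mem' hx hy j := (C j).add_mem (hx j) (hy j)
  zero_mem' j := (C j).zero_mem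
  smul_mem' r _ hx j := (C j).smul_mem r (hx j)

section blockCode

variable {σ ι : Type*}

lemma mem_blockCode {C : σ → Submodule F (ι → F)} {x : σ × ι → F} :
    x ∈ blockCode C ↔ ∀ j, (fun t => x (j, t)) ∈ C j :=
  Iff.rfl

lemma uncurry_single_mem_blockCode [DecidableEq σ] {C : σ → Submodule F (ι → F)} {j : σ}
    {b : ι → F} (hb : b ∈ C j) : Function.uncurry (Pi.single j b) ∈ blockCode C := by
  intro k
  rcases eq_or_ne k j with rfl | hk
  · simpa using hb
  · simp only [Function.uncurry_apply_pair, Pi.single_eq_of_ne hk]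
    exact (C k).zero_mem

lemma dualCode_blockCode [Fintype σ] [Fintype ι] [DecidableEq σ]
    (C : σ → Submodule F (ι → F)) :
    dualCode (blockCode C) = blockCode fun j => dualCode (C j) := by
  ext a
  constructor
  · intro ha j b hb
    simpa [Fintype.sum_prod_type, Pi.single_apply, ite_apply, mul_ite] using
      ha _ (uncurry_single_mem_blockCode hb)
  · intro ha b hb
    rw [Fintype.sum_prod_type]
    exact Finset.sum_eq_zero fun j _ => ha j _ (hb j)

lemma blockCode_inf (C D : σ → Submodule F (ι → F)) :
    blockCode C ⊓ blockCode D = blockCode fun j => C j ⊓ D j := by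
  ext x
  simp only [Submodule.mem_inf, mem_blockCode, forall_and]

lemma blockCode_eq_bot_iff [DecidableEq σ] {C : σ → Submodule F (ι → F)} :
    blockCode C = ⊥ ↔ ∀ j, C j = ⊥ := by
  simp only [Submodule.eq_bot_iff, mem_blockCode]
  constructor
  · intro h j b hb
    funext t
    simpa using congrFun (h _ (uncurry_single_mem_blockCode hb)) (j, t)
  · intro h x hx
    funext p
    exact congrFun (h p.1 _ (hx p.1)) p.2

lemma isLCD_blockCode_iff [Fintype σ] [Fintype ι] [DecidableEq σ]
    {C : σ → Submodule F (ι → F)} : IsLCD (blockCode C) ↔ ∀ j, IsLCD (C j) := by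
  rw [IsLCD, dualCode_blockCode, blockCode_inf, blockCode_eq_bot_iff]
  rfl

end blockCode

/-- `B.BlockTriangular OrderDual.toDual` says that `B` is lower-triangular. -/
lemma sum_smul_mem_of_blockTriangular_toDual {σ ι : Type*} [Fintype σ] [LinearOrder σ]
    {B : Matrix σ σ F} (hB : B.BlockTriangular OrderDual.toDual)
    {C : σ → Submodule F (ι → F)} (hC : Antitone C) {y : σ → ι → F} (hy : ∀ i, y i ∈ C i)
    (j : σ) : ∑ i, B i j • y i ∈ C j := by
  refine Submodule.sum_mem _ fun i _ => ?_
  rcases le_or_gt j i with hji | hij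
  · exact (C j).smul_mem _ (hC hji (hy i))
  · rw [hB hij, zero_smul]
    exact (C j).zero_mem

lemma matrixProductCode_eq_blockCode {s n : ℕ} {A : Matrix (Fin s) (Fin s) F}
    (hA : IsUnit A.det) (hLT : A.BlockTriangular OrderDual.toDual)
    {C : Fin s → Submodule F (Fin n → F)} (hC : Antitone C) :
    matrixProductCode A C = blockCode C := by
  have : Invertible A := A.invertibleOfIsUnitDet hA
  apply le_antisymm
  · rintro _ ⟨c, hc, rfl⟩ j
    convert sum_smul_mem_of_blockTriangular_toDual hLT hC hc j using 1
    ext t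
    simp
  · intro x hx
    refine ⟨fun i => ∑ j, A⁻¹ j i • fun t => x (j, t),
      sum_smul_mem_of_blockTriangular_toDual
        (Matrix.blockTriangular_inv_of_blockTriangular hLT) hC hx, ?_⟩
    ext ⟨k, t⟩
    simp only [Finset.sum_apply, Pi.smul_apply, smul_eq_mul]
    calc x (k, t) = ∑ j, (A⁻¹ * A) j k * x (j, t) := by
          simp [Matrix.one_apply]
      _ = ∑ i, A i k * ∑ j, A⁻¹ j i * x (j, t) := by
          simp_rw [Matrix.mul_apply, Finset.sum_mul, Finset.mul_sum]
          rw [Finset.sum_comm]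
          exact Finset.sum_congr rfl fun _ _ => Finset.sum_congr rfl fun _ _ => by ring

theorem stmt10_general {F : Type*} [Field F]
    {s n : ℕ} (A : Matrix (Fin s) (Fin s) F) (hA : IsUnit A.det)
    (hLT : ∀ i j : Fin s, (i : ℕ) < (j : ℕ) → A i j = 0)
    (C : Fin s → Submodule F (Fin n → F))
    (hchain : ∀ i j : Fin s, i ≤ j → C j ≤ C i) :
    IsLCD (matrixProductCode A C) ↔ ∀ i, IsLCD (C i) := by
  rw [matrixProductCode_eq_blockCode hA (fun i j h => hLT i j h) fun i j h => hchain i j h,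
    isLCD_blockCode_iff]

theorem stmt10 {F : Type*} [Field F] [Fintype F]
    {s n : ℕ} (A : Matrix (Fin s) (Fin s) F) (hA : IsUnit A.det)
    (hLT : ∀ i j : Fin s, (i : ℕ) < (j : ℕ) → A i j = 0)
    (C : Fin s → Submodule F (Fin n → F))
    (hchain : ∀ i j : Fin s, i ≤ j → C j ≤ C i) :
    IsLCD (matrixProductCode A C) ↔ ∀ i, IsLCD (C i) :=
  stmt10_general A hA hLT C hchain
end

section
/- Let l be a prime power, let C_1,…,C_s be linear codes of length n over F_{l^2}, and let A be an s×s matrix over F_{l^2} such that A^{(l)}·A^T is a diagonal matrix all of whose diagonal entries are nonzero, where A^{(l)} is obtained from A by raising every entry to the l-th power. Then the matrix-product code C = [C_1,…,C_s]A is a Hermitian LCD code if and only if C_1,…,C_s are all Hermitian LCD codes. -/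
open Polynomial Matrix Finset

variable {F : Type*} [Field F]

/-!
Since `l ∣ |F| = l²`, `l` is a power of the characteristic and `x ↦ x^l` is a ring endomorphism.
Writing `D = A^{(l)} Aᵀ`, the Hermitian form of two matrix-product words is therefore
`⟨∑ᵢ Aᵢ ⊗ cᵢ, ∑ⱼ Aⱼ ⊗ dⱼ⟩ = ∑ᵢ ∑ⱼ D_{ji} ⟨cᵢ, dⱼ⟩`. When `D` is diagonal with nonzero diagonal
this is `∑ᵢ D_{ii} ⟨cᵢ, dᵢ⟩`, so testing against words supported on a single block `i` identifies
the Hermitian hull of `[C_1, …, C_s] A` blockwise with the hulls of the `C_i`.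
-/

def hermitianForm {R : Type*} [CommRing R] {ι : Type*} [Fintype ι] (l : ℕ) (x y : ι → R) : R :=
  ∑ i, x i * y i ^ l

theorem mem_hermitianDual {l : ℕ} {ι : Type*} [Fintype ι] {C : Submodule F (ι → F)}
    {a : ι → F} : a ∈ hermitianDual l C ↔ ∀ b ∈ C, hermitianForm l a b = 0 :=
  Iff.rfl

theorem isHermitianLCD_iff {l : ℕ} {ι : Type*} [Fintype ι] {C : Submodule F (ι → F)} :
    IsHermitianLCD l C ↔ ∀ x ∈ C, x ∈ hermitianDual l C → x = 0 :=
  disjoint_iff.symm.trans Submodule.disjoint_def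

theorem exists_ringHom_eq_pow_of_dvd_card [Fintype F] {l : ℕ} (hl : l ∣ Fintype.card F) :
    ∃ σ : F →+* F, ∀ x, σ x = x ^ l := by
  obtain ⟨k, hp, hcard⟩ := FiniteField.card F (ringChar F)
  have := Fact.mk hp
  obtain ⟨m, -, rfl⟩ := (Nat.dvd_prime_pow hp).mp (hcard ▸ hl)
  exact ⟨iterateFrobenius F (ringChar F) m, iterateFrobenius_def _ _⟩

section MatrixProductWord

variable {R : Type*} [CommRing R] {ι κ τ : Type*}

theorem exists_ne_zero_of_mul_transpose_apply_ne_zero [Fintype κ] {l : ℕ} {A : Matrix ι κ R}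
    {i : ι} (h : (A.map (· ^ l) * Aᵀ) i i ≠ 0) : ∃ u, A i u ≠ 0 := by
  by_contra! hrow
  exact h (by simp [Matrix.mul_apply, hrow])

variable [Fintype ι]

def matrixProductWord (A : Matrix ι κ R) (c : ι → τ → R) : κ × τ → R :=
  fun p => ∑ i, A i p.1 * c i p.2

theorem matrixProductWord_single [DecidableEq ι] (A : Matrix ι κ R) (i : ι) (c : τ → R) :
    matrixProductWord A (Pi.single i c) = fun p => A i p.1 * c p.2 := by
  funext p
  simp [matrixProductWord, Pi.single_apply, ite_apply]

variable [Fintype τ] {l : ℕ} (σ : R →+* R) (hσ : ∀ x, σ x = x ^ l)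
include hσ

theorem hermitianForm_sum_mul_sum (a b : ι → R) (x y : ι → τ → R) :
    hermitianForm l (fun t => ∑ i, a i * x i t) (fun t => ∑ j, b j * y j t) =
      ∑ i, ∑ j, a i * b j ^ l * hermitianForm l (x i) (y j) := by
  simp only [hermitianForm, ← hσ, map_sum, map_mul]
  simp_rw [Finset.sum_mul_sum, Finset.mul_sum]
  rw [Finset.sum_comm]
  refine Finset.sum_congr rfl fun i _ => ?_
  rw [Finset.sum_comm]
  exact Finset.sum_congr rfl fun j _ => Finset.sum_congr rfl fun t _ => by ring

variable [Fintype κ] (A : Matrix ι κ R)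

theorem hermitianForm_matrixProductWord (c d : ι → τ → R) :
    hermitianForm l (matrixProductWord A c) (matrixProductWord A d) =
      ∑ i, ∑ j, (A.map (· ^ l) * Aᵀ) j i * hermitianForm l (c i) (d j) := by
  calc hermitianForm l (matrixProductWord A c) (matrixProductWord A d)
      = ∑ u, hermitianForm l (fun t => ∑ i, A i u * c i t) (fun t => ∑ j, A j u * d j t) :=
        Fintype.sum_prod_type _
    _ = ∑ u, ∑ i, ∑ j, A i u * A j u ^ l * hermitianForm l (c i) (d j) := by
        simp only [hermitianForm_sum_mul_sum σ hσ]
    _ = ∑ i, ∑ j, (A.map (· ^ l) * Aᵀ) j i * hermitianForm l (c i) (d j) := by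
        rw [Finset.sum_comm]
        refine Finset.sum_congr rfl fun i _ => ?_
        rw [Finset.sum_comm]
        refine Finset.sum_congr rfl fun j _ => ?_
        simp only [Matrix.mul_apply, Matrix.map_apply, Matrix.transpose_apply, Finset.sum_mul]
        exact Finset.sum_congr rfl fun u _ => by ring

variable {A} (hD : (A.map (· ^ l) * Aᵀ).IsDiag)
include hD

theorem hermitianForm_matrixProductWord_of_isDiag (c d : ι → τ → R) :
    hermitianForm l (matrixProductWord A c) (matrixProductWord A d) =
      ∑ i, (A.map (· ^ l) * Aᵀ) i i * hermitianForm l (c i) (d i) := by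
  rw [hermitianForm_matrixProductWord σ hσ]
  exact Finset.sum_congr rfl fun i _ =>
    Fintype.sum_eq_single i fun j hj => by rw [hD hj, zero_mul]

variable [DecidableEq ι]

theorem hermitianForm_matrixProductWord_single_left (i : ι) (c : τ → R) (d : ι → τ → R) :
    hermitianForm l (matrixProductWord A (Pi.single i c)) (matrixProductWord A d) =
      (A.map (· ^ l) * Aᵀ) i i * hermitianForm l c (d i) := by
  rw [hermitianForm_matrixProductWord_of_isDiag σ hσ hD]
  exact (Fintype.sum_eq_single i fun j hj => by simp [hj, hermitianForm]).trans (by simp)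

theorem hermitianForm_matrixProductWord_single_right (c : ι → τ → R) (i : ι) (b : τ → R) :
    hermitianForm l (matrixProductWord A c) (matrixProductWord A (Pi.single i b)) =
      (A.map (· ^ l) * Aᵀ) i i * hermitianForm l (c i) b := by
  rw [hermitianForm_matrixProductWord_of_isDiag σ hσ hD]
  exact (Fintype.sum_eq_single i fun j hj => by simp [hj, hermitianForm, ← hσ]).trans (by simp)

end MatrixProductWord

section MatrixProductCode

variable {s m n : ℕ} {A : Matrix (Fin s) (Fin m) F} {C : Fin s → Submodule F (Fin n → F)}

theorem mem_matrixProductCode {x : Fin m × Fin n → F} :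
    x ∈ matrixProductCode A C ↔ ∃ c, (∀ i, c i ∈ C i) ∧ x = matrixProductWord A c :=
  Iff.rfl

theorem matrixProductWord_mem {c : Fin s → Fin n → F} (hc : ∀ i, c i ∈ C i) :
    matrixProductWord A c ∈ matrixProductCode A C :=
  ⟨c, hc, rfl⟩

theorem matrixProductWord_single_mem {i : Fin s} {c : Fin n → F} (hc : c ∈ C i) :
    matrixProductWord A (Pi.single i c) ∈ matrixProductCode A C := by
  refine matrixProductWord_mem fun j => ?_
  rcases eq_or_ne j i with rfl | hj
  · simpa using hc
  · simp [hj]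

variable {l : ℕ} (σ : F →+* F) (hσ : ∀ x, σ x = x ^ l) (hD : (A.map (· ^ l) * Aᵀ).IsDiag)
include hσ hD

theorem IsHermitianLCD.of_matrixProductCode {i : Fin s} (hi : (A.map (· ^ l) * Aᵀ) i i ≠ 0)
    (h : IsHermitianLCD l (matrixProductCode A C)) : IsHermitianLCD l (C i) := by
  rw [isHermitianLCD_iff] at h ⊢
  intro c hc hcd
  have hdual : matrixProductWord A (Pi.single i c) ∈ hermitianDual l (matrixProductCode A C) := by
    refine mem_hermitianDual.mpr fun y hy => ?_
    obtain ⟨d, hd, rfl⟩ := mem_matrixProductCode.mp hy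
    rw [hermitianForm_matrixProductWord_single_left σ hσ hD,
      mem_hermitianDual.mp hcd _ (hd i), mul_zero]
  have hzero := h _ (matrixProductWord_single_mem hc) hdual
  obtain ⟨u, hu⟩ := exists_ne_zero_of_mul_transpose_apply_ne_zero hi
  funext t
  have hut := congrFun hzero (u, t)
  rw [matrixProductWord_single] at hut
  exact (mul_eq_zero.mp hut).resolve_left hu

theorem isHermitianLCD_matrixProductCode (hdiag : ∀ i, (A.map (· ^ l) * Aᵀ) i i ≠ 0)
    (h : ∀ i, IsHermitianLCD l (C i)) : IsHermitianLCD l (matrixProductCode A C) := by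
  rw [isHermitianLCD_iff]
  intro x hx hdual
  obtain ⟨c, hc, rfl⟩ := mem_matrixProductCode.mp hx
  have hc_dual : ∀ i, c i ∈ hermitianDual l (C i) := fun i => mem_hermitianDual.mpr fun b hb => by
    have hcb := mem_hermitianDual.mp hdual _ (matrixProductWord_single_mem hb)
    rw [hermitianForm_matrixProductWord_single_right σ hσ hD] at hcb
    exact (mul_eq_zero.mp hcb).resolve_left (hdiag i)
  obtain rfl : c = 0 := funext fun i => isHermitianLCD_iff.mp (h i) (c i) (hc i) (hc_dual i)
  funext p
  simp [matrixProductWord]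

end MatrixProductCode

theorem stmt11_general {F : Type*} [Field F] [Fintype F] {l : ℕ}
    (hcard : Fintype.card F = l ^ 2)
    {s n : ℕ} (A : Matrix (Fin s) (Fin s) F)
    (hQO₁ : ∀ i j, i ≠ j → ((A.map (· ^ l)) * Aᵀ) i j = 0)
    (hQO₂ : ∀ i, ((A.map (· ^ l)) * Aᵀ) i i ≠ 0)
    (C : Fin s → Submodule F (Fin n → F)) :
    IsHermitianLCD l (matrixProductCode A C) ↔ ∀ i, IsHermitianLCD l (C i) := by
  obtain ⟨σ, hσ⟩ := exists_ringHom_eq_pow_of_dvd_card (hcard ▸ dvd_pow_self l two_ne_zero)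
  have hD : (A.map (· ^ l) * Aᵀ).IsDiag := fun i j hij => hQO₁ i j hij
  exact ⟨fun h i => h.of_matrixProductCode σ hσ hD (hQO₂ i),
    isHermitianLCD_matrixProductCode σ hσ hD hQO₂⟩

theorem stmt11 {F : Type*} [Field F] [Fintype F] {l : ℕ} (hl : IsPrimePow l)
    (hcard : Fintype.card F = l ^ 2)
    {s n : ℕ} (A : Matrix (Fin s) (Fin s) F)
    (hQO₁ : ∀ i j, i ≠ j → ((A.map (· ^ l)) * Aᵀ) i j = 0)
    (hQO₂ : ∀ i, ((A.map (· ^ l)) * Aᵀ) i i ≠ 0)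
    (C : Fin s → Submodule F (Fin n → F)) :
    IsHermitianLCD l (matrixProductCode A C) ↔ ∀ i, IsHermitianLCD l (C i) :=
  stmt11_general hcard A hQO₁ hQO₂ C
end
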